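/- arXiv:2605.00193 — 6 statements merged into one kernel-verified Lean document; each statement's English description precedes it below -/
import Mathlib

section
/- Quantitative overlap floor (two-expert family): Let X be uniformly distributed on [0,1] and let w*(x) = α*(x) β₁* + (1 − α*(x)) β₂* with β₁*, β₂* ∈ ℝ^J, β₁* ≠ β₂*, and α* : [0,1] → [0,1] nondecreasing. Suppose there exist an interval [a,b] ⊆ [0,1] and κ > 0 such that α*(t) − α*(s) ≥ κ(t − s) for all a ≤ s < t ≤ b. Let W^hard_M denote the class of functions w : [0,1] → ℝ^J that are constant on each cell of a partition of [0,1] into at most M intervals. Then inf_{w ∈ W^hard_M} E[‖w*(X) − w(X)‖₂²] ≥ ‖β₁* − β₂*‖₂² κ² (b − a)³ / (12 M²). -/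
open MeasureTheory

/-- The class of `ℝ^J`-valued step functions constant on each cell of a partition
of `[0,1]` into at most `M` intervals. -/
def hardClass (J M : ℕ) : Set (ℝ → EuclideanSpace ℝ (Fin J)) :=
  {w | ∃ (t : Fin (M + 1) → ℝ) (c : Fin M → EuclideanSpace ℝ (Fin J)),
    Monotone t ∧ t 0 = 0 ∧ t (Fin.last M) = 1 ∧
    ∀ i : Fin M, ∀ x ∈ Set.Ico (t i.castSucc) (t i.succ), w x = c i}

/-!
On a cell where the step function equals `c`, projecting `c` onto the line through `β₁, β₂`
gives a level `g` with `‖w* x - c‖ ≥ ‖β₁ - β₂‖ |α x - g|`. The growth condition makes `α`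
`κ`-expanding on `[a, b]`, so on the part of the cell inside `[a, b]`, of length `ℓ`, some
`x₀` satisfies `κ |x - x₀| ≤ |α x - g|`, and the cell costs at least
`‖β₁ - β₂‖² κ² ℓ³ / 12`. The lengths `ℓ` of the at most `M` cells add up to `b - a`, and the
power mean inequality `∑ ℓ³ ≥ (∑ ℓ)³ / M²` concludes.
-/

open Set Finset

theorem exists_forall_sq_norm_mul_sq_sub_le_norm_smul_add_sq {E : Type*} [NormedAddCommGroup E]
    [InnerProductSpace ℝ E] (u v : E) :
    ∃ g : ℝ, ∀ r : ℝ, ‖u‖ ^ 2 * (r - g) ^ 2 ≤ ‖r • u + v‖ ^ 2 := by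
  refine ⟨-inner ℝ v u / ‖u‖ ^ 2, fun r => ?_⟩
  rcases eq_or_ne u 0 with rfl | hu
  · simp
  have hu2 : 0 < ‖u‖ ^ 2 := pow_pos (norm_pos_iff.2 hu) 2
  have hinner : ‖u‖ ^ 2 * (r - -inner ℝ v u / ‖u‖ ^ 2) = inner ℝ (r • u + v) u := by
    rw [inner_add_left, real_inner_smul_left, real_inner_self_eq_norm_sq]
    field_simp
    ring
  refine le_of_mul_le_mul_left ?_ hu2
  calc ‖u‖ ^ 2 * (‖u‖ ^ 2 * (r - -inner ℝ v u / ‖u‖ ^ 2) ^ 2)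
      = inner ℝ (r • u + v) u ^ 2 := by rw [← hinner]; ring
    _ ≤ (‖r • u + v‖ * ‖u‖) ^ 2 := by
      rw [← sq_abs]
      exact pow_le_pow_left₀ (abs_nonneg _) (abs_real_inner_le_norm _ _) 2
    _ = ‖u‖ ^ 2 * ‖r • u + v‖ ^ 2 := by ring

theorem exists_mem_Icc_forall_abs_sub_le {s e : ℝ} (hse : s ≤ e) {d : ℝ → ℝ}
    (hd : ∀ x ∈ Icc s e, ∀ y ∈ Icc s e, |x - y| ≤ d x + d y) :
    ∃ x₀ ∈ Icc s e, ∀ x ∈ Icc s e, |x - x₀| ≤ d x := by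
  have hd₀ : ∀ x ∈ Icc s e, 0 ≤ d x := fun x hx => by
    have := hd x hx x hx
    rw [sub_self, abs_zero] at this
    linarith
  -- `x₀` is the largest left end of the pairwise intersecting intervals `[x - d x, x + d x]`.
  set A := insert s ((fun x => x - d x) '' Icc s e)
  have hA_le : ∀ y ∈ Icc s e, ∀ z ∈ A, z ≤ y + d y := by
    rintro y hy z (rfl | ⟨x, hx, rfl⟩)
    · linarith [hy.1, hd₀ y hy]
    · linarith [hd x hx y hy, le_abs_self (x - y)]
  have hA_le_e : ∀ z ∈ A, z ≤ e := by
    rintro z (rfl | ⟨x, hx, rfl⟩)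
    · exact hse
    · linarith [hx.2, hd₀ x hx]
  have hbdd : BddAbove A := ⟨e, hA_le_e⟩
  refine ⟨sSup A, ⟨le_csSup hbdd (mem_insert _ _), csSup_le (insert_nonempty _ _) hA_le_e⟩,
    fun x hx => abs_sub_le_iff.2 ⟨?_, ?_⟩⟩
  · linarith [le_csSup hbdd (mem_insert_of_mem _ ⟨x, hx, rfl⟩)]
  · linarith [csSup_le (insert_nonempty _ _) (hA_le x hx)]

theorem exists_mem_Icc_forall_mul_abs_sub_le {α : ℝ → ℝ} {s e κ : ℝ} (hκ : 0 < κ) (hse : s ≤ e)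
    (hα : ∀ x ∈ Icc s e, ∀ y ∈ Icc s e, κ * |x - y| ≤ |α x - α y|) (g : ℝ) :
    ∃ x₀ ∈ Icc s e, ∀ x ∈ Icc s e, κ * |x - x₀| ≤ |α x - g| := by
  obtain ⟨x₀, hx₀, h⟩ := exists_mem_Icc_forall_abs_sub_le hse (d := fun x => |α x - g| / κ)
    fun x hx y hy => by
      rw [← add_div, le_div_iff₀ hκ, mul_comm]
      exact (hα x hx y hy).trans ((abs_sub_le _ g _).trans_eq (by rw [abs_sub_comm g]))
  refine ⟨x₀, hx₀, fun x hx => ?_⟩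
  have := h x hx
  rwa [le_div_iff₀ hκ, mul_comm] at this

theorem mul_abs_sub_le_abs_sub_of_growth {α : ℝ → ℝ} {κ a b : ℝ}
    (h : ∀ s t : ℝ, a ≤ s → s < t → t ≤ b → κ * (t - s) ≤ α t - α s) :
    ∀ x ∈ Icc a b, ∀ y ∈ Icc a b, κ * |x - y| ≤ |α x - α y| := by
  intro x hx y hy
  rcases lt_trichotomy x y with hxy | rfl | hxy
  · rw [abs_sub_comm x, abs_sub_comm (α x), abs_of_pos (sub_pos.2 hxy)]
    exact (h x y hx.1 hxy hy.2).trans (le_abs_self _)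
  · simp
  · rw [abs_of_pos (sub_pos.2 hxy)]
    exact (h y x hy.1 hxy hx.2).trans (le_abs_self _)

theorem cube_div_twelve_le_integral_sq_sub {s e x₀ : ℝ} (hx₀ : x₀ ∈ Icc s e) :
    (e - s) ^ 3 / 12 ≤ ∫ x in Ioo s e, (x - x₀) ^ 2 := by
  rw [← integral_Ioc_eq_integral_Ioo, ← intervalIntegral.integral_of_le (hx₀.1.trans hx₀.2),
    intervalIntegral.integral_comp_sub_right (fun x => x ^ 2), integral_pow]
  have hp : 0 ≤ e - x₀ := sub_nonneg.2 hx₀.2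
  have hq : 0 ≤ x₀ - s := sub_nonneg.2 hx₀.1
  nlinarith [mul_nonneg (add_nonneg hp hq) (sq_nonneg (e - x₀ - (x₀ - s)))]

theorem integrableOn_Icc_comp_of_monotoneOn {E : Type*} [NormedAddCommGroup E] {g : ℝ → E}
    (hg : Continuous g) {φ : ℝ → ℝ} {a b : ℝ} (hφ : MonotoneOn φ (Icc a b)) :
    IntegrableOn (fun x => g (φ x)) (Icc a b) := by
  obtain ⟨C, hC⟩ := (isCompact_Icc (a := φ a) (b := φ b)).exists_bound_of_continuousOn
    hg.continuousOn
  refine Integrable.of_bound (hg.comp_aestronglyMeasurable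
    (aemeasurable_restrict_of_monotoneOn measurableSet_Icc hφ).aestronglyMeasurable) C ?_
  filter_upwards [ae_restrict_mem measurableSet_Icc] with x hx
  have hab : a ≤ b := hx.1.trans hx.2
  exact hC _ ⟨hφ (left_mem_Icc.2 hab) hx hx.1, hφ hx (right_mem_Icc.2 hab) hx.2⟩

theorem integrableOn_Icc_of_forall_integrableOn_Ico {E : Type*} [NormedAddCommGroup E]
    {f : ℝ → E} {T : ℕ → ℝ} {N : ℕ} (hf : ∀ i < N, IntegrableOn f (Ico (T i) (T (i + 1)))) :
    IntegrableOn f (Icc (T 0) (T N)) := by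
  rw [integrableOn_Icc_iff_integrableOn_Ico]
  exact (integrableOn_finset_iUnion.2 fun i hi => hf i (mem_range.1 hi)).mono_set
    (Ico_subset_biUnion_Ico N T)

theorem sum_setIntegral_Ioo_le_setIntegral {f : ℝ → ℝ} {s : Set ℝ} {U : ℕ → ℝ} {N : ℕ}
    (hU : Monotone U) (hf : IntegrableOn f s) (hf₀ : 0 ≤ᵐ[volume.restrict s] f)
    (hs : ∀ i < N, Ioo (U i) (U (i + 1)) ⊆ s) :
    ∑ i ∈ range N, ∫ x in Ioo (U i) (U (i + 1)), f x ≤ ∫ x in s, f x := by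
  have hsub : ⋃ i ∈ range N, Ioo (U i) (U (i + 1)) ⊆ s :=
    iUnion₂_subset fun i hi => hs i (mem_range.1 hi)
  rw [← integral_biUnion_finset (range N) (fun _ _ => measurableSet_Ioo)
    ((by simpa only [Order.succ_eq_add_one] using hU.pairwise_disjoint_on_Ioo_succ :
      Pairwise (Function.onFun Disjoint fun i => Ioo (U i) (U (i + 1)))).set_pairwise _)
    (fun i hi => hf.mono_set (hs i (mem_range.1 hi)))]
  exact setIntegral_mono_set hf hf₀ hsub.eventuallyLE

theorem cube_sub_div_sq_le_sum_cube {U : ℕ → ℝ} (hU : Monotone U) (N : ℕ) :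
    (U N - U 0) ^ 3 / (N : ℝ) ^ 2 ≤ ∑ i ∈ range N, (U (i + 1) - U i) ^ 3 := by
  rw [← sum_range_sub]
  simpa using pow_sum_div_card_le_sum_pow (s := range N)
    (fun i _ => sub_nonneg.2 (hU i.le_succ)) 2

theorem Ioo_max_min_subset_Ioo {a b u v : ℝ} :
    Ioo (max a (min b u)) (max a (min b v)) ⊆ Ioo u v := by
  intro x ⟨h₁, h₂⟩
  simp only [max_lt_iff, min_lt_iff, lt_max_iff, lt_min_iff] at h₁ h₂
  constructor <;> grind

theorem sq_norm_mul_sq_mul_cube_div_twelve_le_setIntegral {E : Type*} [NormedAddCommGroup E]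
    [InnerProductSpace ℝ E] (β₁ β₂ c : E) {α F : ℝ → ℝ} {s e κ : ℝ} (hκ : 0 < κ) (hse : s ≤ e)
    (hα : ∀ x ∈ Icc s e, ∀ y ∈ Icc s e, κ * |x - y| ≤ |α x - α y|)
    (hF : IntegrableOn F (Ioo s e))
    (hαF : ∀ x ∈ Ioo s e, ‖α x • β₁ + (1 - α x) • β₂ - c‖ ^ 2 ≤ F x) :
    ‖β₁ - β₂‖ ^ 2 * κ ^ 2 * (e - s) ^ 3 / 12 ≤ ∫ x in Ioo s e, F x := by
  obtain ⟨g, hg⟩ := exists_forall_sq_norm_mul_sq_sub_le_norm_smul_add_sq (β₁ - β₂) (β₂ - c)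
  obtain ⟨x₀, hx₀, hαx₀⟩ := exists_mem_Icc_forall_mul_abs_sub_le hκ hse hα g
  have hpoint : ∀ x ∈ Ioo s e, ‖β₁ - β₂‖ ^ 2 * κ ^ 2 * (x - x₀) ^ 2 ≤ F x := fun x hx =>
    calc ‖β₁ - β₂‖ ^ 2 * κ ^ 2 * (x - x₀) ^ 2 = ‖β₁ - β₂‖ ^ 2 * (κ * |x - x₀|) ^ 2 := by
          rw [mul_pow, sq_abs, mul_assoc]
      _ ≤ ‖β₁ - β₂‖ ^ 2 * (α x - g) ^ 2 := by
          rw [← sq_abs (α x - g)]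
          gcongr
          exact hαx₀ x (Ioo_subset_Icc_self hx)
      _ ≤ ‖α x • (β₁ - β₂) + (β₂ - c)‖ ^ 2 := hg (α x)
      _ = ‖α x • β₁ + (1 - α x) • β₂ - c‖ ^ 2 := by congr 2; module
      _ ≤ F x := hαF x hx
  calc ‖β₁ - β₂‖ ^ 2 * κ ^ 2 * (e - s) ^ 3 / 12
      = ‖β₁ - β₂‖ ^ 2 * κ ^ 2 * ((e - s) ^ 3 / 12) := by ring
    _ ≤ ‖β₁ - β₂‖ ^ 2 * κ ^ 2 * ∫ x in Ioo s e, (x - x₀) ^ 2 := by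
        gcongr
        exact cube_div_twelve_le_integral_sq_sub hx₀
    _ = ∫ x in Ioo s e, ‖β₁ - β₂‖ ^ 2 * κ ^ 2 * (x - x₀) ^ 2 :=
        (integral_const_mul _ _).symm
    _ ≤ ∫ x in Ioo s e, F x :=
        setIntegral_mono_on
          ((by fun_prop : Continuous fun x : ℝ => ‖β₁ - β₂‖ ^ 2 * κ ^ 2 * (x - x₀) ^ 2)
            |>.integrableOn_Icc.mono_set Ioo_subset_Icc_self)
          hF measurableSet_Ioo hpoint

theorem hardClass_nonempty {J M : ℕ} (hM : 1 ≤ M) : (hardClass J M).Nonempty := by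
  have hM₀ : (0 : ℝ) < M := by exact_mod_cast hM
  refine ⟨fun _ => 0, fun i => (i : ℝ) / M, fun _ => 0, fun i j hij => ?_, by simp, ?_,
    fun _ _ _ => rfl⟩
  · exact div_le_div_of_nonneg_right (by exact_mod_cast hij) hM₀.le
  · simp [hM₀.ne']

theorem exists_nat_partition_of_mem_hardClass {J M : ℕ} {w : ℝ → EuclideanSpace ℝ (Fin J)}
    (hw : w ∈ hardClass J M) :
    ∃ T : ℕ → ℝ, Monotone T ∧ T 0 = 0 ∧ T M = 1 ∧
      ∀ i < M, ∃ c, ∀ x ∈ Ico (T i) (T (i + 1)), w x = c := by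
  obtain ⟨t, c, ht, ht₀, ht₁, hc⟩ := hw
  refine ⟨fun n => t ⟨min n M, by omega⟩, fun m n hmn => ht (Fin.mk_le_mk.2 (by omega)),
    ht₀, by simpa [Fin.last] using ht₁, fun i hi => ⟨c ⟨i, hi⟩, fun x hx => hc ⟨i, hi⟩ x ?_⟩⟩
  simpa [Fin.castSucc, Fin.succ, min_eq_left hi.le, min_eq_left (Nat.succ_le_of_lt hi)] using hx

theorem Ico_subset_Icc_of_monotone {T : ℕ → ℝ} (hT : Monotone T) {i N : ℕ} (hi : i < N) :
    Ico (T i) (T (i + 1)) ⊆ Icc (T 0) (T N) :=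
  Ico_subset_Icc_self.trans (Icc_subset_Icc (hT (Nat.zero_le i)) (hT hi))

section StepFunction

variable {E : Type*} [NormedAddCommGroup E] {α : ℝ → ℝ} {β₁ β₂ : E} {w : ℝ → E}
  {T : ℕ → ℝ} {N : ℕ}

theorem integrableOn_norm_sub_sq_of_step [NormedSpace ℝ E] (hα : MonotoneOn α (Icc (T 0) (T N)))
    (hT : Monotone T) (hw : ∀ i < N, ∃ c, ∀ x ∈ Ico (T i) (T (i + 1)), w x = c) :
    IntegrableOn (fun x => ‖α x • β₁ + (1 - α x) • β₂ - w x‖ ^ 2) (Icc (T 0) (T N)) := by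
  refine integrableOn_Icc_of_forall_integrableOn_Ico fun i hi => ?_
  obtain ⟨c, hc⟩ := hw i hi
  refine ((integrableOn_Icc_comp_of_monotoneOn (g := fun r => ‖r • β₁ + (1 - r) • β₂ - c‖ ^ 2)
    (by fun_prop) hα).mono_set (Ico_subset_Icc_of_monotone hT hi)).congr_fun
    (fun x hx => ?_) measurableSet_Ico
  rw [hc x hx]

theorem sq_norm_mul_sq_mul_cube_div_le_setIntegral_of_step [InnerProductSpace ℝ E]
    (hα : MonotoneOn α (Icc (T 0) (T N))) {a b κ : ℝ} (hκ : 0 < κ)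
    (hgrowth : ∀ s t : ℝ, a ≤ s → s < t → t ≤ b → κ * (t - s) ≤ α t - α s)
    (hT : Monotone T) (hTa : T 0 ≤ a) (hab : a ≤ b) (hTb : b ≤ T N)
    (hw : ∀ i < N, ∃ c, ∀ x ∈ Ico (T i) (T (i + 1)), w x = c) :
    ‖β₁ - β₂‖ ^ 2 * κ ^ 2 * (b - a) ^ 3 / (12 * (N : ℝ) ^ 2)
      ≤ ∫ x in Icc (T 0) (T N), ‖α x • β₁ + (1 - α x) • β₂ - w x‖ ^ 2 := by
  have hf := integrableOn_norm_sub_sq_of_step (β₁ := β₁) (β₂ := β₂) hα hT hw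
  set U : ℕ → ℝ := fun n => max a (min b (T n))
  have hU : Monotone U := fun m n h => max_le_max le_rfl (min_le_min le_rfl (hT h))
  have hUab : ∀ i, Icc (U i) (U (i + 1)) ⊆ Icc a b := fun i =>
    Icc_subset_Icc (le_max_left _ _) (max_le hab (min_le_left _ _))
  have hUT : ∀ i, Ioo (U i) (U (i + 1)) ⊆ Ico (T i) (T (i + 1)) := fun i =>
    Ioo_max_min_subset_Ioo.trans Ioo_subset_Ico_self
  have hexp := mul_abs_sub_le_abs_sub_of_growth hgrowth
  have hpiece : ∀ i < N, ‖β₁ - β₂‖ ^ 2 * κ ^ 2 * (U (i + 1) - U i) ^ 3 / 12 ≤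
      ∫ x in Ioo (U i) (U (i + 1)), ‖α x • β₁ + (1 - α x) • β₂ - w x‖ ^ 2 := by
    intro i hi
    obtain ⟨c, hc⟩ := hw i hi
    refine sq_norm_mul_sq_mul_cube_div_twelve_le_setIntegral β₁ β₂ c hκ (hU i.le_succ)
      (fun x hx y hy => hexp x (hUab i hx) y (hUab i hy))
      (hf.mono_set ((hUT i).trans (Ico_subset_Icc_of_monotone hT hi))) fun x hx => ?_
    rw [hc x (hUT i hx)]
  have hUa : U 0 = a := max_eq_left ((min_le_right _ _).trans hTa)
  have hUb : U N = b := by simp only [U, min_eq_left hTb, max_eq_right hab]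
  calc ‖β₁ - β₂‖ ^ 2 * κ ^ 2 * (b - a) ^ 3 / (12 * (N : ℝ) ^ 2)
      = ‖β₁ - β₂‖ ^ 2 * κ ^ 2 / 12 * ((U N - U 0) ^ 3 / (N : ℝ) ^ 2) := by
        rw [hUa, hUb]; ring
    _ ≤ ‖β₁ - β₂‖ ^ 2 * κ ^ 2 / 12 * ∑ i ∈ range N, (U (i + 1) - U i) ^ 3 := by
        gcongr
        exact cube_sub_div_sq_le_sum_cube hU N
    _ = ∑ i ∈ range N, ‖β₁ - β₂‖ ^ 2 * κ ^ 2 * (U (i + 1) - U i) ^ 3 / 12 := by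
        rw [mul_sum]
        exact sum_congr rfl fun i _ => by ring
    _ ≤ ∑ i ∈ range N, ∫ x in Ioo (U i) (U (i + 1)), ‖α x • β₁ + (1 - α x) • β₂ - w x‖ ^ 2 :=
        sum_le_sum fun i hi => hpiece i (mem_range.1 hi)
    _ ≤ ∫ x in Icc (T 0) (T N), ‖α x • β₁ + (1 - α x) • β₂ - w x‖ ^ 2 :=
        sum_setIntegral_Ioo_le_setIntegral hU hf (ae_of_all _ fun x => sq_nonneg _)
          fun i hi => (hUT i).trans (Ico_subset_Icc_of_monotone hT hi)

end StepFunction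

theorem quantitative_overlap_floor_general
    {J M : ℕ} (hM : 1 ≤ M)
    (β₁ β₂ : EuclideanSpace ℝ (Fin J))
    (αs : ℝ → ℝ)
    (hαmono : MonotoneOn αs (Set.Icc (0 : ℝ) 1))
    (a b κ : ℝ) (ha : 0 ≤ a) (hab : a ≤ b) (hb : b ≤ 1) (hκ : 0 < κ)
    (hgrowth : ∀ s t : ℝ, a ≤ s → s < t → t ≤ b → κ * (t - s) ≤ αs t - αs s)
    (wstar : ℝ → EuclideanSpace ℝ (Fin J))
    (hw : ∀ x, wstar x = αs x • β₁ + (1 - αs x) • β₂) :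
    ‖β₁ - β₂‖ ^ 2 * κ ^ 2 * (b - a) ^ 3 / (12 * (M : ℝ) ^ 2)
      ≤ sInf ((fun w => ∫ x in Set.Icc (0 : ℝ) 1, ‖wstar x - w x‖ ^ 2) ''
          hardClass J M) := by
  refine le_csInf ((hardClass_nonempty hM).image _) ?_
  rintro _ ⟨w, hwM, rfl⟩
  obtain ⟨T, hT, hT₀, hTM, hconst⟩ := exists_nat_partition_of_mem_hardClass hwM
  have := sq_norm_mul_sq_mul_cube_div_le_setIntegral_of_step (β₁ := β₁) (β₂ := β₂)
    (by rwa [hT₀, hTM]) hκ hgrowth hT (hT₀ ▸ ha) hab (hTM ▸ hb) hconst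
  simpa only [hT₀, hTM, hw] using this

/-- **Quantitative overlap floor (two-expert family).** If `X ~ Unif[0,1]`,
`wstar x = αs x • β₁ + (1 - αs x) • β₂` with `β₁ ≠ β₂` and nondecreasing
`αs : [0,1] → [0,1]` satisfying κ-growth on `[a,b] ⊆ [0,1]`, then the best
`M`-interval hard approximation error is at least
`‖β₁ - β₂‖² κ² (b - a)³ / (12 M²)`. -/
theorem quantitative_overlap_floor
    {J M : ℕ} (hM : 1 ≤ M)
    (β₁ β₂ : EuclideanSpace ℝ (Fin J)) (hβ : β₁ ≠ β₂)
    (αs : ℝ → ℝ)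
    (hα01 : ∀ x ∈ Set.Icc (0 : ℝ) 1, αs x ∈ Set.Icc (0 : ℝ) 1)
    (hαmono : MonotoneOn αs (Set.Icc (0 : ℝ) 1))
    (a b κ : ℝ) (ha : 0 ≤ a) (hab : a ≤ b) (hb : b ≤ 1) (hκ : 0 < κ)
    (hgrowth : ∀ s t : ℝ, a ≤ s → s < t → t ≤ b → κ * (t - s) ≤ αs t - αs s)
    (wstar : ℝ → EuclideanSpace ℝ (Fin J))
    (hw : ∀ x, wstar x = αs x • β₁ + (1 - αs x) • β₂) :
    ‖β₁ - β₂‖ ^ 2 * κ ^ 2 * (b - a) ^ 3 / (12 * (M : ℝ) ^ 2)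
      ≤ sInf ((fun w => ∫ x in Set.Icc (0 : ℝ) 1, ‖wstar x - w x‖ ^ 2) ''
          hardClass J M) :=
  quantitative_overlap_floor_general hM β₁ β₂ αs hαmono a b κ ha hab hb hκ hgrowth wstar hw
end

section
/- Scalar reduction for the two-expert hard class: Let X be uniformly distributed on [0,1], let w*(x) = β₂* + α*(x) Δ where Δ := β₁* − β₂* ∈ ℝ^J and α* : [0,1] → [0,1] is measurable. Let W^hard_M denote the class of functions w : [0,1] → ℝ^J constant on each cell of a partition of [0,1] into at most M intervals, and let S_M denote the class of scalar step functions g : [0,1] → ℝ constant on each cell of a partition of [0,1] into at most M intervals. Then inf_{w ∈ W^hard_M} E[‖w*(X) − w(X)‖₂²] = ‖Δ‖₂² · inf_{g ∈ S_M} E[(α*(X) − g(X))²]; that is, any component of a hard approximant orthogonal to Δ only increases the error, so the best M-interval hard approximation lies on the line segment direction spanned by β₁* − β₂*. -/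
/-!
Write `w* = β₂ + α* • Δ`. Every hard approximant `w` gives the scalar step function
`g = ⟪w - β₂, Δ⟫ / ‖Δ‖²` on the same partition, and by Cauchy–Schwarz
`‖w* - w‖² ≥ ⟪w* - w, Δ⟫² / ‖Δ‖² = ‖Δ‖² (α* - g)²` pointwise. Conversely every scalar step
function `g` gives the hard approximant `β₂ + g • Δ`, whose error is exactly `‖Δ‖² (α* - g)²`.
So the two sets of errors dominate each other elementwise and have the same infimum.
-/

open MeasureTheory

/-- The class of real-valued step functions constant on each cell of a partition
of `[0,1]` into at most `M` intervals. -/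
def stepClass (M : ℕ) : Set (ℝ → ℝ) :=
  {g | ∃ (t : Fin (M + 1) → ℝ) (c : Fin M → ℝ),
    Monotone t ∧ t 0 = 0 ∧ t (Fin.last M) = 1 ∧
    ∀ i : Fin M, ∀ x ∈ Set.Ico (t i.castSucc) (t i.succ), g x = c i}

open Set
open scoped RealInnerProductSpace

-- `hardClass J M` and `stepClass M` are `{f | IsIntervalStep M f}` by definition.
def IsIntervalStep {E : Type*} (M : ℕ) (f : ℝ → E) : Prop :=
  ∃ (t : Fin (M + 1) → ℝ) (c : Fin M → E), Monotone t ∧ t 0 = 0 ∧ t (Fin.last M) = 1 ∧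
    ∀ i : Fin M, ∀ x ∈ Ico (t i.castSucc) (t i.succ), f x = c i

theorem exists_mem_Ico_castSucc_succ {X : Type*} [LinearOrder X] {M : ℕ} (t : Fin (M + 1) → X)
    {x : X} (hx : x ∈ Ico (t 0) (t (Fin.last M))) :
    ∃ i : Fin M, x ∈ Ico (t i.castSucc) (t i.succ) := by
  have hcover := Ico_subset_biUnion_Ico M (fun k => t ⟨min k M, by omega⟩)
  simp only [Nat.zero_min, min_self] at hcover
  obtain ⟨i, hi, hxi⟩ := mem_iUnion₂.1 (hcover hx)
  rw [Finset.mem_range] at hi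
  refine ⟨⟨i, hi⟩, ?_⟩
  convert hxi using 3 <;> simp <;> omega

section IsIntervalStep

variable {E : Type*} {M : ℕ} {f : ℝ → E}

theorem IsIntervalStep.comp {F : Type*} (h : E → F) (hf : IsIntervalStep M f) :
    IsIntervalStep M (h ∘ f) := by
  obtain ⟨t, c, ht, h0, h1, hc⟩ := hf
  exact ⟨t, h ∘ c, ht, h0, h1, fun i x hx => congrArg h (hc i x hx)⟩

theorem IsIntervalStep.integrableOn_Icc {G : Type*} [NormedAddCommGroup G]
    (hf : IsIntervalStep M f) {F : ℝ → E → G}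
    (hF : ∀ c, IntegrableOn (fun x => F x c) (Icc 0 1)) :
    IntegrableOn (fun x => F x (f x)) (Icc 0 1) := by
  obtain ⟨t, c, ht, h0, h1, hc⟩ := hf
  have hcover : Ico (0 : ℝ) 1 ⊆ ⋃ i : Fin M, Ico (t i.castSucc) (t i.succ) := fun x hx =>
    mem_iUnion.2 (exists_mem_Ico_castSucc_succ t (by rwa [h0, h1]))
  rw [integrableOn_Icc_iff_integrableOn_Ico]
  refine IntegrableOn.mono_set (integrableOn_finite_iUnion.2 fun i => ?_) hcover
  have hcell : Ico (t i.castSucc) (t i.succ) ⊆ Icc 0 1 := fun x hx =>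
    ⟨h0 ▸ (ht (Fin.zero_le _)).trans hx.1, h1 ▸ hx.2.le.trans (ht (Fin.le_last _))⟩
  exact ((hF (c i)).mono_set hcell).congr_fun (fun x hx => by rw [hc i x hx]) measurableSet_Ico

end IsIntervalStep

theorem Continuous.integrableOn_comp_of_mapsTo {X G : Type*} [MeasurableSpace X] {μ : Measure X}
    [NormedAddCommGroup G] {φ : ℝ → G} (hφ : Continuous φ) {α : X → ℝ} (hα : Measurable α)
    {s : Set X} (hs : MeasurableSet s) (hμs : μ s ≠ ⊤) {K : Set ℝ} (hK : IsCompact K)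
    (hαK : MapsTo α s K) : IntegrableOn (φ ∘ α) s μ := by
  obtain ⟨C, hC⟩ := hK.exists_bound_of_continuousOn hφ.continuousOn
  exact Measure.integrableOn_of_bounded hμs (hφ.comp_aestronglyMeasurable hα.aestronglyMeasurable)
    (ae_restrict_of_forall_mem hs fun x hx => hC _ (hαK hx))

section InnerProductSpace

variable {E : Type*} [NormedAddCommGroup E] [InnerProductSpace ℝ E]

theorem norm_sq_mul_sq_sub_inner_div_le (a : ℝ) (Δ v : E) :
    ‖Δ‖ ^ 2 * (a - ⟪v, Δ⟫ / ‖Δ‖ ^ 2) ^ 2 ≤ ‖a • Δ - v‖ ^ 2 := by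
  rcases eq_or_ne Δ 0 with rfl | hΔ
  · simp
  have hpos : 0 < ‖Δ‖ ^ 2 := by positivity
  have hinner : ⟪a • Δ - v, Δ⟫ = ‖Δ‖ ^ 2 * (a - ⟪v, Δ⟫ / ‖Δ‖ ^ 2) := by
    rw [inner_sub_left, real_inner_smul_left, real_inner_self_eq_norm_sq]
    field_simp
  have hcs : ⟪a • Δ - v, Δ⟫ ^ 2 ≤ ‖a • Δ - v‖ ^ 2 * ‖Δ‖ ^ 2 := by
    simpa only [sq, real_inner_self_eq_norm_sq] using real_inner_mul_inner_self_le (a • Δ - v) Δ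
  rw [hinner] at hcs
  nlinarith

variable {M : ℕ} (β Δ : E) {α : ℝ → ℝ}

theorem integral_norm_add_smul_sub_add_smul_sq (g : ℝ → ℝ) (μ : Measure ℝ) :
    ∫ x, ‖β + α x • Δ - (β + g x • Δ)‖ ^ 2 ∂μ = ‖Δ‖ ^ 2 * ∫ x, (α x - g x) ^ 2 ∂μ := by
  simp_rw [add_sub_add_left_eq_sub, ← sub_smul, norm_smul, mul_pow, Real.norm_eq_abs, sq_abs,
    ← integral_const_mul, mul_comm]

theorem mul_integral_sq_sub_inner_div_le (hα : Measurable α)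
    (hα01 : MapsTo α (Icc 0 1) (Icc 0 1)) {w : ℝ → E} (hw : IsIntervalStep M w) :
    ‖Δ‖ ^ 2 * ∫ x in Icc 0 1, (α x - ⟪w x - β, Δ⟫ / ‖Δ‖ ^ 2) ^ 2
      ≤ ∫ x in Icc 0 1, ‖β + α x • Δ - w x‖ ^ 2 := by
  have hint : IntegrableOn (fun x => ‖β + α x • Δ - w x‖ ^ 2) (Icc 0 1) :=
    hw.integrableOn_Icc fun c => (by fun_prop : Continuous fun a : ℝ => ‖β + a • Δ - c‖ ^ 2)
      |>.integrableOn_comp_of_mapsTo hα measurableSet_Icc measure_Icc_lt_top.ne isCompact_Icc hα01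
  rw [← integral_const_mul]
  refine integral_mono_of_nonneg (.of_forall fun x => by positivity) hint (.of_forall fun x => ?_)
  have hsplit : β + α x • Δ - w x = α x • Δ - (w x - β) := by abel
  simpa only [hsplit] using norm_sq_mul_sq_sub_inner_div_le (α x) Δ (w x - β)

end InnerProductSpace

theorem scalar_reduction_two_expert_hard_general
    {J M : ℕ}
    (β₂ Δ : EuclideanSpace ℝ (Fin J))
    (αs : ℝ → ℝ) (hαmeas : Measurable αs)
    (hα01 : ∀ x ∈ Set.Icc (0 : ℝ) 1, αs x ∈ Set.Icc (0 : ℝ) 1)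
    (wstar : ℝ → EuclideanSpace ℝ (Fin J))
    (hw : ∀ x, wstar x = β₂ + αs x • Δ) :
    sInf ((fun w => ∫ x in Set.Icc (0 : ℝ) 1, ‖wstar x - w x‖ ^ 2) ''
        hardClass J M)
      = ‖Δ‖ ^ 2 *
        sInf ((fun g => ∫ x in Set.Icc (0 : ℝ) 1, (αs x - g x) ^ 2) ''
          stepClass M) := by
  obtain rfl : wstar = fun x => β₂ + αs x • Δ := funext hw
  rw [← smul_eq_mul, ← Real.sInf_smul_of_nonneg (sq_nonneg ‖Δ‖), ← image_smul, image_image]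
  refine csInf_eq_csInf_of_forall_exists_le ?_ ?_
  · rintro _ ⟨w, hwM, rfl⟩
    exact ⟨_, ⟨_, IsIntervalStep.comp (fun v => ⟪v - β₂, Δ⟫ / ‖Δ‖ ^ 2) hwM, rfl⟩,
      mul_integral_sq_sub_inner_div_le β₂ Δ hαmeas hα01 hwM⟩
  · rintro _ ⟨g, hgM, rfl⟩
    exact ⟨_, ⟨_, IsIntervalStep.comp (fun a => β₂ + a • Δ) hgM, rfl⟩,
      (integral_norm_add_smul_sub_add_smul_sq β₂ Δ g _).le⟩

/-- **Scalar reduction for the two-expert hard class.** With `X ~ Unif[0,1]` and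
`wstar x = β₂ + αs x • Δ`, `Δ = β₁ - β₂`, the best `M`-interval vector-valued hard
approximation error equals `‖Δ‖²` times the best `M`-interval scalar step
approximation error of `αs`. -/
theorem scalar_reduction_two_expert_hard
    {J M : ℕ} (hM : 1 ≤ M)
    (β₁ β₂ Δ : EuclideanSpace ℝ (Fin J)) (hΔ : Δ = β₁ - β₂)
    (αs : ℝ → ℝ) (hαmeas : Measurable αs)
    (hα01 : ∀ x ∈ Set.Icc (0 : ℝ) 1, αs x ∈ Set.Icc (0 : ℝ) 1)
    (wstar : ℝ → EuclideanSpace ℝ (Fin J))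
    (hw : ∀ x, wstar x = β₂ + αs x • Δ) :
    sInf ((fun w => ∫ x in Set.Icc (0 : ℝ) 1, ‖wstar x - w x‖ ^ 2) ''
        hardClass J M)
      = ‖Δ‖ ^ 2 *
        sInf ((fun g => ∫ x in Set.Icc (0 : ℝ) 1, (αs x - g x) ^ 2) ''
          stepClass M) :=
  scalar_reduction_two_expert_hard_general β₂ Δ αs hαmeas hα01 wstar hw
end

section
/- Local variance lower bound under κ-growth: Let α* : [a,b] → ℝ satisfy α*(t) − α*(s) ≥ κ(t − s) for all a ≤ s < t ≤ b, with κ > 0. Let J ⊆ [a,b] be a subinterval of length h > 0 and let U be uniformly distributed on J. Then (i) Var(α*(U)) ≥ κ² h² / 12, and (ii) the best constant approximation on J satisfies inf_{c ∈ ℝ} ∫_J (α*(x) − c)² dx ≥ κ² h³ / 12. (The proof uses that φ(x) := α*(x) − κx is nondecreasing on [a,b], so Cov(U, φ(U)) ≥ 0 by comonotonicity, giving Var(κU + φ(U)) ≥ κ² Var(U) = κ² h²/12.) -/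
open MeasureTheory

/-- **Local variance lower bound under κ-growth.** If `αs` satisfies
`αs t - αs s ≥ κ (t - s)` on `[a,b]` with `κ > 0`, `[u,v] ⊆ [a,b]` has length
`h > 0`, and `U ~ Unif[u,v]`, then (i) `Var(αs U) ≥ κ² h² / 12` and (ii) the best
constant approximation on `[u,v]` satisfies
`inf_c ∫_[u,v] (αs x - c)² dx ≥ κ² h³ / 12`. -/
theorem local_variance_lower_bound_kappa_growth
    (a b κ : ℝ) (hab : a ≤ b) (hκ : 0 < κ)
    (αs : ℝ → ℝ)
    (hgrowth : ∀ s t : ℝ, a ≤ s → s < t → t ≤ b → κ * (t - s) ≤ αs t - αs s)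
    (u v h : ℝ) (hu : a ≤ u) (huv : u ≤ v) (hv : v ≤ b)
    (hh : v - u = h) (hpos : 0 < h) :
    κ ^ 2 * h ^ 2 / 12
      ≤ (1 / h) * ∫ x in Set.Icc u v,
          (αs x - (1 / h) * ∫ y in Set.Icc u v, αs y) ^ 2
    ∧ κ ^ 2 * h ^ 3 / 12
      ≤ ⨅ c : ℝ, ∫ x in Set.Icc u v, (αs x - c) ^ 2 := by
  -- monotonicity of αs on [u,v]
  have hmonoIcc : ∀ p q : ℝ, p ∈ Set.Icc u v → q ∈ Set.Icc u v → p ≤ q → αs p ≤ αs q := by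
    intro p q hp hq hpq
    rcases eq_or_lt_of_le hpq with rfl | hlt
    · exact le_rfl
    · have := hgrowth p q (hu.trans hp.1) hlt (hq.2.trans hv)
      nlinarith
  -- monotone extension of αs
  set g : ℝ → ℝ := fun x => αs (max u (min v x)) with hgdef
  have hclampmem : ∀ x : ℝ, max u (min v x) ∈ Set.Icc u v := by
    intro x
    exact ⟨le_max_left _ _, max_le huv (min_le_left _ _)⟩
  have hgeq : ∀ x ∈ Set.Icc u v, g x = αs x := by
    intro x hx
    have : max u (min v x) = x := by
      rw [min_eq_right hx.2, max_eq_right hx.1]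
    simp [hgdef, this]
  have hgmono : Monotone g := by
    intro x y hxy
    exact hmonoIcc _ _ (hclampmem x) (hclampmem y)
      (max_le_max le_rfl (min_le_min le_rfl hxy))
  have hgmeas : Measurable g := hgmono.measurable
  -- key inequality for arbitrary c
  have key : ∀ c : ℝ, κ ^ 2 * h ^ 3 / 12 ≤ ∫ x in Set.Icc u v, (αs x - c) ^ 2 := by
    intro c
    set F : ℝ → ℝ := fun x => (g x - c) ^ 2 with hFdef
    have hcong : (∫ x in Set.Icc u v, (αs x - c) ^ 2) = ∫ x in Set.Icc u v, F x := by
      apply setIntegral_congr_fun measurableSet_Icc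
      intro x hx
      simp [hFdef, hgeq x hx]
    have hFmeas : Measurable F := (hgmeas.sub measurable_const).pow_const 2
    -- integrability of F on Icc u v
    have hFbdd : ∀ x ∈ Set.Icc u v, ‖F x‖ ≤ (g u - c) ^ 2 + (g v - c) ^ 2 := by
      intro x hx
      have h1 : g u ≤ g x := hgmono hx.1
      have h2 : g x ≤ g v := hgmono hx.2
      rw [Real.norm_eq_abs, abs_of_nonneg (sq_nonneg _)]
      simp only [hFdef]
      nlinarith [sq_nonneg (g u - c), sq_nonneg (g v - c), sq_nonneg (g u + g v - 2 * c),
        mul_nonneg (sub_nonneg.2 h1) (sub_nonneg.2 h2)]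
    have hFintOn : IntegrableOn F (Set.Icc u v) volume := by
      apply Measure.integrableOn_of_bounded (M := (g u - c) ^ 2 + (g v - c) ^ 2)
        measure_Icc_lt_top.ne hFmeas.aestronglyMeasurable
      exact (ae_restrict_iff' measurableSet_Icc).2 (ae_of_all _ hFbdd)
    have hFint : IntervalIntegrable F volume u v :=
      (intervalIntegrable_iff_integrableOn_Icc_of_le huv).2 hFintOn
    have hFint2 : IntervalIntegrable (fun x => F (u + v - x)) volume u v := by
      have := hFint.comp_sub_left (u + v)
      have e1 : u + v - u = v := by ring
      have e2 : u + v - v = u := by ring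
      rw [e1, e2] at this
      exact this.symm
    -- mirror identity
    have hmirror : (∫ x in u..v, F (u + v - x)) = ∫ x in u..v, F x := by
      rw [intervalIntegral.integral_comp_sub_left F (u + v)]
      congr 1 <;> ring
    -- pointwise bound on the symmetrized integrand
    have hpt : ∀ x ∈ Set.Icc u v,
        κ ^ 2 * (2 * x - u - v) ^ 2 / 2 ≤ F x + F (u + v - x) := by
      intro x hx
      set y := u + v - x with hy
      have hyI : y ∈ Set.Icc u v := ⟨by simp [hy]; linarith [hx.2], by simp [hy]; linarith [hx.1]⟩
      have hgx : g x = αs x := hgeq x hx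
      have hgy : g y = αs y := hgeq y hyI
      have hsq : κ ^ 2 * (x - y) ^ 2 ≤ (αs x - αs y) ^ 2 := by
        rcases lt_trichotomy x y with hlt | heq | hgt
        · have hg1 := hgrowth x y (hu.trans hx.1) hlt (hyI.2.trans hv)
          have hd : 0 ≤ κ * (y - x) := mul_nonneg hκ.le (by linarith)
          nlinarith [mul_nonneg (sub_nonneg.2 hg1)
            (by linarith : (0:ℝ) ≤ (αs y - αs x) + κ * (y - x))]
        · rw [heq]; simp
        · have hg1 := hgrowth y x (hu.trans hyI.1) hgt (hx.2.trans hv)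
          have hd : 0 ≤ κ * (x - y) := mul_nonneg hκ.le (by linarith)
          nlinarith [mul_nonneg (sub_nonneg.2 hg1)
            (by linarith : (0:ℝ) ≤ (αs x - αs y) + κ * (x - y))]
      have hxy : x - y = 2 * x - u - v := by rw [hy]; ring
      rw [hxy] at hsq
      simp only [hFdef, hgx, hgy]
      nlinarith [sq_nonneg (αs x + αs y - 2 * c)]
    -- lower integrand is integrable
    have hlowint : IntervalIntegrable (fun x => κ ^ 2 * (2 * x - u - v) ^ 2 / 2) volume u v :=
      (by fun_prop : Continuous fun x : ℝ => κ ^ 2 * (2 * x - u - v) ^ 2 / 2).intervalIntegrable u v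
    have hmono' := intervalIntegral.integral_mono_on huv hlowint (hFint.add hFint2) hpt
    -- compute the lower integral
    have hcomp : (∫ x in u..v, κ ^ 2 * (2 * x - u - v) ^ 2 / 2) = κ ^ 2 * h ^ 3 / 6 := by
      have e : (fun x : ℝ => κ ^ 2 * (2 * x - u - v) ^ 2 / 2)
          = fun x : ℝ => (2 * κ ^ 2) * x ^ 2 + ((-(2 * κ ^ 2 * (u + v))) * x
            + κ ^ 2 * (u + v) ^ 2 / 2) := by
        funext x; ring
      have i1 : IntervalIntegrable (fun x : ℝ => (2 * κ ^ 2) * x ^ 2) volume u v :=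
        (by fun_prop : Continuous fun x : ℝ => (2 * κ ^ 2) * x ^ 2).intervalIntegrable u v
      have i2 : IntervalIntegrable (fun x : ℝ => (-(2 * κ ^ 2 * (u + v))) * x) volume u v :=
        (by fun_prop : Continuous fun x : ℝ => (-(2 * κ ^ 2 * (u + v))) * x).intervalIntegrable u v
      have i3 : IntervalIntegrable (fun _ : ℝ => κ ^ 2 * (u + v) ^ 2 / 2) volume u v :=
        intervalIntegrable_const
      rw [e, intervalIntegral.integral_add i1 (i2.add i3), intervalIntegral.integral_add i2 i3,
        intervalIntegral.integral_const_mul, intervalIntegral.integral_const_mul,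
        intervalIntegral.integral_const, integral_pow, integral_id]
      subst hh
      simp only [smul_eq_mul]
      push_cast
      ring
    have hadd : (∫ x in u..v, (F x + F (u + v - x)))
        = 2 * ∫ x in u..v, F x := by
      rw [intervalIntegral.integral_add hFint hFint2, hmirror]; ring
    have hIccIoc : (∫ x in Set.Icc u v, F x) = ∫ x in u..v, F x := by
      rw [intervalIntegral.integral_of_le huv, ← integral_Icc_eq_integral_Ioc]
    rw [hcong, hIccIoc]
    rw [hcomp, hadd] at hmono'
    linarith
  constructor
  · have hk := key ((1 / h) * ∫ y in Set.Icc u v, αs y)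
    have h1 : (0:ℝ) < 1 / h := by positivity
    have := mul_le_mul_of_nonneg_left hk h1.le
    calc κ ^ 2 * h ^ 2 / 12 = (1 / h) * (κ ^ 2 * h ^ 3 / 12) := by
          field_simp
      _ ≤ _ := this
  · exact le_ciInf key
end

section
/- Aligned-hard ε-boundary bound: Under the two-expert family w*(x) = α*(x)β₁* + (1 − α*(x))β₂* with Δβ* := β₁* − β₂* and oracle-aligned two-cell hard partition C_{1/2}(x) = 1{α*(x) ≥ 1/2}, for every ε ∈ (0, 1/2) one has inf_{w ∈ W_{C_{1/2}}} E[‖w*(X) − w(X)‖₂²] ≤ ‖Δβ*‖₂² ( ε² + (1/4) · P(α*(X) ∈ [ε, 1 − ε]) ). In particular the aligned-hard approximation error is small whenever the mass of contexts with ambiguous mixing weight (α*(X) ∈ [ε, 1−ε]) is small. -/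
/-!
Round the mixing weight: the hard map `x ↦ if 1/2 ≤ α x then β₁ else β₂` lies in the class, and
its error at `x` is `min (α x) (1 - α x) • Δβ`. The rounding error `min a (1 - a)` is at most `1/2`
everywhere on `[0, 1]` and below `ε` off the ambiguous band `[ε, 1 - ε]`, so its square is at most
`ε² + 1/4 · 1[ε ≤ a ≤ 1 - ε]`; integrating this pointwise bound gives the claim.
-/

open MeasureTheory

/-- The oracle-aligned two-cell hard class `W_{C_{1/2}}`: maps constant on each of
the two cells of the partition `C_{1/2}(x) = 1{αs x ≥ 1/2}`. -/
def alignedHardClass {𝒳 : Type*} (J : ℕ) (αs : 𝒳 → ℝ) :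
    Set (𝒳 → EuclideanSpace ℝ (Fin J)) :=
  {w | ∃ b₁ b₂ : EuclideanSpace ℝ (Fin J),
    ∀ x, w x = if (1 : ℝ) / 2 ≤ αs x then b₁ else b₂}

theorem norm_smul_add_one_sub_smul_sub_ite_sq {E : Type*} [SeminormedAddCommGroup E] [NormedSpace ℝ E]
    (a : ℝ) (b₁ b₂ : E) :
    ‖a • b₁ + (1 - a) • b₂ - (if (1 : ℝ) / 2 ≤ a then b₁ else b₂)‖ ^ 2
      = min a (1 - a) ^ 2 * ‖b₁ - b₂‖ ^ 2 := by
  split_ifs with h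
  · have hv : a • b₁ + (1 - a) • b₂ - b₁ = (a - 1) • (b₁ - b₂) := by module
    rw [hv, norm_smul, mul_pow, Real.norm_eq_abs, sq_abs, min_eq_right (by linarith)]
    ring
  · have hv : a • b₁ + (1 - a) • b₂ - b₂ = a • (b₁ - b₂) := by module
    rw [hv, norm_smul, mul_pow, Real.norm_eq_abs, sq_abs, min_eq_left (by linarith)]

theorem min_one_sub_sq_le_sq_add_indicator {a : ℝ} (ha : a ∈ Set.Icc (0 : ℝ) 1) (ε : ℝ) :
    min a (1 - a) ^ 2 ≤ ε ^ 2 + 1 / 4 * (Set.Icc ε (1 - ε)).indicator 1 a := by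
  obtain ⟨ha0, ha1⟩ := ha
  have hmin0 : 0 ≤ min a (1 - a) := le_min ha0 (by linarith)
  by_cases hband : a ∈ Set.Icc ε (1 - ε)
  · have hmin : min a (1 - a) ≤ 1 / 2 := by
      rcases le_total a (1 / 2) with h | h
      · exact (min_le_left _ _).trans h
      · exact (min_le_right _ _).trans (by linarith)
    rw [Set.indicator_of_mem hband, Pi.one_apply]
    nlinarith
  · have hmin : min a (1 - a) < ε := by
      simp only [Set.mem_Icc, not_and_or, not_le] at hband
      rcases hband with h | h
      · exact (min_le_left _ _).trans_lt h
      · exact (min_le_right _ _).trans_lt (by linarith)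
    rw [Set.indicator_of_notMem hband]
    nlinarith

theorem integral_le_add_mul_measureReal {Ω : Type*} [MeasurableSpace Ω] (μ : Measure Ω)
    [IsProbabilityMeasure μ] {f : Ω → ℝ} {S : Set Ω} (hS : MeasurableSet S) {c d : ℝ}
    (hf0 : ∀ ω, 0 ≤ f ω) (hf : ∀ ω, f ω ≤ c + d * S.indicator 1 ω) :
    ∫ ω, f ω ∂μ ≤ c + d * μ.real S := by
  have hind : Integrable (fun ω => d * S.indicator 1 ω) μ :=
    ((integrable_indicator_iff hS).2 (integrable_const 1).integrableOn).const_mul d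
  have hbound : Integrable (fun ω => c + d * S.indicator 1 ω) μ := (integrable_const c).add hind
  calc ∫ ω, f ω ∂μ ≤ ∫ ω, c + d * S.indicator 1 ω ∂μ :=
        integral_mono_of_nonneg (.of_forall hf0) hbound (.of_forall hf)
    _ = c + d * μ.real S := by
        rw [integral_add (integrable_const c) hind, integral_const_mul,
          integral_indicator_one hS]
        simp

theorem aligned_hard_epsilon_boundary_bound_general
    {J : ℕ} {Ω 𝒳 : Type*} [MeasurableSpace Ω] [MeasurableSpace 𝒳]
    (μ : Measure Ω) [IsProbabilityMeasure μ]
    (X : Ω → 𝒳) (hX : Measurable X)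
    (αs : 𝒳 → ℝ) (hαmeas : Measurable αs)
    (hα01 : ∀ x, αs x ∈ Set.Icc (0 : ℝ) 1)
    (β₁ β₂ : EuclideanSpace ℝ (Fin J))
    (wstar : 𝒳 → EuclideanSpace ℝ (Fin J))
    (hw : ∀ x, wstar x = αs x • β₁ + (1 - αs x) • β₂)
    (ε : ℝ) :
    sInf ((fun w : 𝒳 → EuclideanSpace ℝ (Fin J) =>
        ∫ ω, ‖wstar (X ω) - w (X ω)‖ ^ 2 ∂μ) '' alignedHardClass J αs)
      ≤ ‖β₁ - β₂‖ ^ 2 *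
          (ε ^ 2 + (1 / 4) *
            (μ {ω | αs (X ω) ∈ Set.Icc ε (1 - ε)}).toReal) := by
  set hardRound : 𝒳 → EuclideanSpace ℝ (Fin J) := fun x => if (1 : ℝ) / 2 ≤ αs x then β₁ else β₂
  have hmem : hardRound ∈ alignedHardClass J αs := ⟨β₁, β₂, fun _ => rfl⟩
  have hband : MeasurableSet {ω | αs (X ω) ∈ Set.Icc ε (1 - ε)} :=
    (hαmeas.comp hX) measurableSet_Icc
  have hpointwise : ∀ ω, ‖wstar (X ω) - hardRound (X ω)‖ ^ 2 ≤ ‖β₁ - β₂‖ ^ 2 * ε ^ 2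
      + ‖β₁ - β₂‖ ^ 2 / 4 * {ω | αs (X ω) ∈ Set.Icc ε (1 - ε)}.indicator 1 ω := by
    intro ω
    have hround := min_one_sub_sq_le_sq_add_indicator (hα01 (X ω)) ε
    have hindicator : {ω | αs (X ω) ∈ Set.Icc ε (1 - ε)}.indicator (1 : Ω → ℝ) ω
        = (Set.Icc ε (1 - ε)).indicator 1 (αs (X ω)) :=
      Set.indicator_comp_right (g := 1) (αs ∘ X)
    rw [hw, norm_smul_add_one_sub_smul_sub_ite_sq, hindicator]
    linarith [mul_le_mul_of_nonneg_right hround (sq_nonneg ‖β₁ - β₂‖)]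
  refine le_trans (csInf_le ⟨0, ?_⟩ ⟨hardRound, hmem, rfl⟩) ?_
  · rintro _ ⟨w, -, rfl⟩
    positivity
  refine (integral_le_add_mul_measureReal μ hband (fun _ => by positivity) hpointwise).trans_eq ?_
  rw [measureReal_def]
  ring

/-- **Aligned-hard ε-boundary bound.** Under the two-expert family, for every
`ε ∈ (0, 1/2)` the oracle-aligned two-cell hard class satisfies
`inf E[‖wstar X - w X‖²] ≤ ‖β₁ - β₂‖² (ε² + (1/4) P(αs(X) ∈ [ε, 1-ε]))`. -/
theorem aligned_hard_epsilon_boundary_bound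
    {J : ℕ} {Ω 𝒳 : Type*} [MeasurableSpace Ω] [MeasurableSpace 𝒳]
    (μ : Measure Ω) [IsProbabilityMeasure μ]
    (X : Ω → 𝒳) (hX : Measurable X)
    (αs : 𝒳 → ℝ) (hαmeas : Measurable αs)
    (hα01 : ∀ x, αs x ∈ Set.Icc (0 : ℝ) 1)
    (β₁ β₂ : EuclideanSpace ℝ (Fin J))
    (wstar : 𝒳 → EuclideanSpace ℝ (Fin J))
    (hw : ∀ x, wstar x = αs x • β₁ + (1 - αs x) • β₂)
    (ε : ℝ) (hε0 : 0 < ε) (hε : ε < 1 / 2) :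
    sInf ((fun w : 𝒳 → EuclideanSpace ℝ (Fin J) =>
        ∫ ω, ‖wstar (X ω) - w (X ω)‖ ^ 2 ∂μ) '' alignedHardClass J αs)
      ≤ ‖β₁ - β₂‖ ^ 2 *
          (ε ^ 2 + (1 / 4) *
            (μ {ω | αs (X ω) ∈ Set.Icc ε (1 - ε)}).toReal) :=
  aligned_hard_epsilon_boundary_bound_general μ X hX αs hαmeas hα01 β₁ β₂ wstar hw ε
end

section
/- Localized expected regret bound: Let X be a random context, and let γ(X) ≥ 0, δ(X) ≥ 0, R(X) ≥ 0 be measurable random variables with δ(X) square-integrable and satisfying the pointwise margin-local bound R(X) ≤ 2 δ(X) · 1{γ(X) ≤ 2 δ(X)} almost surely. Then for every threshold η > 0, E[R(X)] ≤ 2η · P(γ(X) ≤ 2η) + 2 E[δ(X)²] / η. -/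
open MeasureTheory

/-! Pointwise, `2δ·1{γ ≤ 2δ} ≤ 2η·1{γ ≤ 2η} + 2δ²/η`: when `δ ≤ η` the margin event
`γ ≤ 2δ` forces `γ ≤ 2η`, and when `δ > η` the regret `2δ` is at most `2δ²/η`.
Integrating this bound gives the result. -/

lemma two_mul_ite_le_ite_add_sq_div {η : ℝ} (hη : 0 < η) (g d : ℝ) :
    2 * d * (if g ≤ 2 * d then (1 : ℝ) else 0)
      ≤ (if g ≤ 2 * η then 2 * η else 0) + 2 * d ^ 2 / η := by
  have hsq : 0 ≤ 2 * d ^ 2 / η := by positivity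
  by_cases hd : d ≤ η
  · split_ifs <;> linarith
  · have : 2 * d ≤ 2 * d ^ 2 / η := by
      rw [le_div_iff₀ hη]; nlinarith
    split_ifs <;> linarith

theorem localized_expected_regret_bound_general
    {Ω : Type*} [MeasurableSpace Ω]
    (μ : Measure Ω) [IsProbabilityMeasure μ]
    (γ δ R : Ω → ℝ)
    (hγm : Measurable γ)
    (hR0 : ∀ ω, 0 ≤ R ω)
    (hδ2 : Integrable (fun ω => δ ω ^ 2) μ)
    (hpt : ∀ᵐ ω ∂μ,
      R ω ≤ 2 * δ ω * (if γ ω ≤ 2 * δ ω then (1 : ℝ) else 0)) :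
    ∀ η : ℝ, 0 < η →
      ∫ ω, R ω ∂μ
        ≤ 2 * η * (μ {ω | γ ω ≤ 2 * η}).toReal
          + 2 * (∫ ω, δ ω ^ 2 ∂μ) / η := by
  intro η hη
  set S : Set Ω := {ω | γ ω ≤ 2 * η}
  have hS : MeasurableSet S := measurableSet_le hγm measurable_const
  have hmargin : Integrable (S.indicator fun _ => 2 * η) μ := (integrable_const _).indicator hS
  have hvar : Integrable (fun ω => 2 * δ ω ^ 2 / η) μ := (hδ2.const_mul 2).div_const η
  have hbound : ∀ᵐ ω ∂μ, R ω ≤ S.indicator (fun _ => 2 * η) ω + 2 * δ ω ^ 2 / η := by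
    filter_upwards [hpt] with ω hω
    simpa only [S, Set.indicator_apply, Set.mem_ofPred_eq] using
      hω.trans (two_mul_ite_le_ite_add_sq_div hη (γ ω) (δ ω))
  calc ∫ ω, R ω ∂μ ≤ ∫ ω, S.indicator (fun _ => 2 * η) ω + 2 * δ ω ^ 2 / η ∂μ :=
        integral_mono_of_nonneg (ae_of_all _ hR0) (hmargin.add hvar) hbound
    _ = 2 * η * (μ S).toReal + 2 * (∫ ω, δ ω ^ 2 ∂μ) / η := by
        rw [integral_add hmargin hvar, integral_indicator_const _ hS, integral_div,
          integral_const_mul, smul_eq_mul, mul_comm, measureReal_def]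

/-- **Localized expected regret bound.** If the nonnegative measurable random
variables `γ, δ, R` satisfy the pointwise margin-local bound
`R ≤ 2δ · 1{γ ≤ 2δ}` a.s. and `δ` is square-integrable, then for every threshold
`η > 0`, `E[R] ≤ 2η P(γ ≤ 2η) + 2 E[δ²]/η`. -/
theorem localized_expected_regret_bound
    {Ω : Type*} [MeasurableSpace Ω]
    (μ : Measure Ω) [IsProbabilityMeasure μ]
    (γ δ R : Ω → ℝ)
    (hγm : Measurable γ) (hδm : Measurable δ) (hRm : Measurable R)
    (hγ0 : ∀ ω, 0 ≤ γ ω) (hδ0 : ∀ ω, 0 ≤ δ ω) (hR0 : ∀ ω, 0 ≤ R ω)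
    (hδ2 : Integrable (fun ω => δ ω ^ 2) μ)
    (hpt : ∀ᵐ ω ∂μ,
      R ω ≤ 2 * δ ω * (if γ ω ≤ 2 * δ ω then (1 : ℝ) else 0)) :
    ∀ η : ℝ, 0 < η →
      ∫ ω, R ω ∂μ
        ≤ 2 * η * (μ {ω | γ ω ≤ 2 * η}).toReal
          + 2 * (∫ ω, δ ω ^ 2 ∂μ) / η :=
  localized_expected_regret_bound_general μ γ δ R hγm hR0 hδ2 hpt
end

section
/- Margin-tail regret transfer: Let X be a random context in a measurable space 𝒳, let D be a finite nonempty decision set, z : 𝒳 × D → ℝ^J a factor map with sup_{x,d} ‖z(x,d)‖₂ ≤ B_z, and w*, ŵ : 𝒳 → ℝ^J measurable with ŵ − w* square-integrable. For each x define scores s*_x(d) = ⟨w*(x), z(x,d)⟩ and ŝ_x(d) = ⟨ŵ(x), z(x,d)⟩, the oracle margin γ(x) (gap between the best and second-best true scores, zero if the oracle optimum is not unique), the regret R(x) = s*_x(d*(x)) − s*_x(d̂(x)) where d*(x) maximizes s*_x and d̂(x) maximizes ŝ_x, and suppose the margin lower-tail condition P(γ(X) ≤ t) ≤ C_mar t^α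 holds for all t > 0, for some constants C_mar, α > 0. Then there exists a constant C depending only on B_z, C_mar, and α such that E[R(X)] ≤ C · ( E[‖ŵ(X) − w*(X)‖₂²] )^{(1+α)/(2+α)}. -/
open MeasureTheory
open scoped RealInnerProductSpace

/-!
Write `Δ = ŵ(x) - w*(x)`. Since `d̂` is optimal for `ŝ`, the regret is at most `2 B_z ‖Δ‖`,
and a nonzero regret is at least the margin `γ(x)`. Fix a threshold `t > 0`. Where `γ > t`,
a nonzero regret exceeds `t`, so `R ≤ R² / t ≤ 4 B_z² ‖Δ‖² / t`; where `γ ≤ t`, AM-GM gives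
`R ≤ B_z ‖Δ‖² / t + B_z t`. Taking expectations and using the margin tail,
`E R ≤ (B_z + 4 B_z²) ε / t + B_z C_mar t^(1+α)` with `ε = E ‖Δ‖²`, and `t = ε^(1/(2+α))`
balances the two terms.
-/

noncomputable def margin {D : Type*} [Fintype D] [DecidableEq D] (s : D → ℝ) (a : D) : ℝ :=
  if hne : (Finset.univ.erase a).Nonempty then s a - (Finset.univ.erase a).sup' hne s else 0

theorem margin_le_sub {D : Type*} [Fintype D] [DecidableEq D] (s : D → ℝ) {a d : D}
    (hd : d ≠ a) : margin s a ≤ s a - s d := by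
  have hmem : d ∈ Finset.univ.erase a := Finset.mem_erase.2 ⟨hd, Finset.mem_univ d⟩
  rw [margin, dif_pos ⟨d, hmem⟩]
  linarith [Finset.le_sup' s hmem]

theorem le_sq_div_add_ite {r g u B t : ℝ} (hB : 0 ≤ B) (ht : 0 < t) (hr : 0 ≤ r)
    (hru : r ≤ 2 * B * u) (hgr : 0 < r → g ≤ r) :
    r ≤ (B + 4 * B ^ 2) / t * u ^ 2 + if g ≤ t then B * t else 0 := by
  rw [div_mul_eq_mul_div]
  split_ifs with hg
  · rw [div_add' _ _ _ ht.ne', le_div_iff₀ ht]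
    nlinarith [mul_nonneg hB (sq_nonneg (u - t)), mul_nonneg (sq_nonneg B) (sq_nonneg u)]
  · rw [add_zero, le_div_iff₀ ht]
    rcases hr.eq_or_lt with rfl | hpos
    · nlinarith [mul_nonneg (sq_nonneg B) (sq_nonneg u)]
    · have hrt : r * t ≤ r * r := mul_le_mul_of_nonneg_left (by linarith [hgr hpos]) hr
      nlinarith [mul_self_le_mul_self hr hru, mul_nonneg hB (sq_nonneg u)]

/-- Neither `f` nor `A` need be measurable: `μ.real A` is the outer measure, and a
non-integrable `f` has integral `0`. -/
theorem integral_le_integral_add_mul_measureReal {Ω : Type*} [MeasurableSpace Ω]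
    {μ : Measure Ω} [IsFiniteMeasure μ] {f g : Ω → ℝ} {A : Set Ω} {c : ℝ}
    (hf : 0 ≤ᵐ[μ] f) (hg : Integrable g μ) (hc : 0 ≤ c)
    (h : ∀ᵐ ω ∂μ, f ω ≤ g ω + A.indicator (fun _ => c) ω) :
    ∫ ω, f ω ∂μ ≤ ∫ ω, g ω ∂μ + c * μ.real A := by
  have hA : MeasurableSet (toMeasurable μ A) := measurableSet_toMeasurable μ A
  have hind : Integrable ((toMeasurable μ A).indicator fun _ => c) μ :=
    (integrable_const c).indicator hA
  calc ∫ ω, f ω ∂μ ≤ ∫ ω, (g ω + (toMeasurable μ A).indicator (fun _ => c) ω) ∂μ := by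
        refine integral_mono_of_nonneg hf (hg.add hind) (h.mono fun ω hω => hω.trans ?_)
        exact add_le_add_right (Set.indicator_le_indicator_of_subset (f := fun _ => c)
          (subset_toMeasurable μ A) (fun _ => hc) ω) _
    _ = ∫ ω, g ω ∂μ + c * μ.real A := by
        rw [integral_add hg hind, integral_indicator_const c hA, smul_eq_mul, mul_comm,
          measureReal_def, measure_toMeasurable, ← measureReal_def]

theorem div_mul_add_mul_rpow_mul_eq {ε α : ℝ} (hε : 0 < ε) (hα : 2 + α ≠ 0) (K M : ℝ) :
    K / ε ^ (1 / (2 + α)) * ε + M * ((ε ^ (1 / (2 + α))) ^ α * ε ^ (1 / (2 + α)))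
      = (K + M) * ε ^ ((1 + α) / (2 + α)) := by
  have hdiv : ε / ε ^ (1 / (2 + α)) = ε ^ ((1 + α) / (2 + α)) := by
    rw [show (1 + α) / (2 + α) = 1 - 1 / (2 + α) by field_simp; ring, Real.rpow_sub hε,
      Real.rpow_one]
  have hmul : (ε ^ (1 / (2 + α))) ^ α * ε ^ (1 / (2 + α)) = ε ^ ((1 + α) / (2 + α)) := by
    rw [← Real.rpow_mul hε.le, ← Real.rpow_add hε]
    congr 1
    field_simp
    ring
  rw [hmul, div_mul_eq_mul_div, mul_div_assoc, hdiv]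
  ring

section Scores

variable {E D : Type*} [NormedAddCommGroup E] [InnerProductSpace ℝ E]

theorem inner_sub_inner_le_of_inner_le {w w' a b : E} (h : ⟪w', a⟫ ≤ ⟪w', b⟫) :
    ⟪w, a⟫ - ⟪w, b⟫ ≤ ‖w' - w‖ * (‖a‖ + ‖b‖) :=
  calc ⟪w, a⟫ - ⟪w, b⟫ = (⟪w', a⟫ - ⟪w', b⟫) - ⟪w' - w, a - b⟫ := by
        simp only [inner_sub_left, inner_sub_right]
        ring
    _ ≤ ‖w' - w‖ * ‖a - b‖ := by
        linarith [neg_abs_le ⟪w' - w, a - b⟫, abs_real_inner_le_norm (w' - w) (a - b)]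
    _ ≤ ‖w' - w‖ * (‖a‖ + ‖b‖) := by
        gcongr
        exact norm_sub_le a b

theorem regret_le_two_mul_norm_sub {w w' : E} {z : D → E} {B : ℝ} {a b : D}
    (hz : ∀ d, ‖z d‖ ≤ B) (hb : ∀ d, ⟪w', z d⟫ ≤ ⟪w', z b⟫) :
    ⟪w, z a⟫ - ⟪w, z b⟫ ≤ 2 * B * ‖w' - w‖ :=
  (inner_sub_inner_le_of_inner_le (hb a)).trans <| by
    nlinarith [hz a, hz b, norm_nonneg (w' - w)]

theorem regret_le_sq_div_add_ite [Fintype D] [DecidableEq D] {w w' : E} {z : D → E}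
    {B t : ℝ} {a b : D} (hB : 0 ≤ B) (ht : 0 < t) (hz : ∀ d, ‖z d‖ ≤ B)
    (ha : ∀ d, ⟪w, z d⟫ ≤ ⟪w, z a⟫) (hb : ∀ d, ⟪w', z d⟫ ≤ ⟪w', z b⟫) :
    ⟪w, z a⟫ - ⟪w, z b⟫ ≤ (B + 4 * B ^ 2) / t * ‖w' - w‖ ^ 2 +
      if margin (fun d => ⟪w, z d⟫) a ≤ t then B * t else 0 :=
  le_sq_div_add_ite hB ht (sub_nonneg.2 (ha b)) (regret_le_two_mul_norm_sub hz hb)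
    fun hpos => margin_le_sub _ fun hba => by simp [hba] at hpos

end Scores

/-- **Margin-tail regret transfer.** There is a constant `C` depending only on the
factor bound `Bz`, the margin-tail constant `Cmar`, and the tail exponent `α` such
that, for any finite-library contextual decision problem with factors bounded by
`Bz`, square-integrable weight-estimation error, and margin lower-tail condition
`P(γ(X) ≤ t) ≤ Cmar t^α` for all `t > 0`, the expected regret satisfies
`E[R(X)] ≤ C (E[‖ŵ(X) - w*(X)‖²])^{(1+α)/(2+α)}`. -/
theorem margin_tail_regret_transfer
    (Bz Cmar α : ℝ) (hBz : 0 ≤ Bz) (hCmar : 0 < Cmar) (hα : 0 < α) :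
    ∃ C : ℝ, 0 < C ∧
      ∀ (J : ℕ) (Ω 𝒳 : Type) [MeasurableSpace Ω] [MeasurableSpace 𝒳]
        (μ : Measure Ω) [IsProbabilityMeasure μ]
        (D : Type) [Fintype D] [Nonempty D] [DecidableEq D]
        (X : Ω → 𝒳) (_hX : Measurable X)
        (z : 𝒳 → D → EuclideanSpace ℝ (Fin J))
        (_hz : ∀ x d, ‖z x d‖ ≤ Bz)
        (wstar what : 𝒳 → EuclideanSpace ℝ (Fin J))
        (_hwstar : Measurable wstar) (_hwhat : Measurable what)
        (_hL2 : Integrable (fun ω => ‖what (X ω) - wstar (X ω)‖ ^ 2) μ)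
        (dstar dhat : 𝒳 → D)
        (_hdstar : ∀ x d,
          (inner ℝ (wstar x) (z x d) : ℝ) ≤ (inner ℝ (wstar x) (z x (dstar x)) : ℝ))
        (_hdhat : ∀ x d,
          (inner ℝ (what x) (z x d) : ℝ) ≤ (inner ℝ (what x) (z x (dhat x)) : ℝ))
        (γ : 𝒳 → ℝ)
        (_hγ : ∀ x, γ x =
          if hne : (Finset.univ.erase (dstar x)).Nonempty
          then (inner ℝ (wstar x) (z x (dstar x)) : ℝ) -
            (Finset.univ.erase (dstar x)).sup' hne
              (fun d => (inner ℝ (wstar x) (z x d) : ℝ))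
          else 0)
        (R : 𝒳 → ℝ)
        (_hR : ∀ x, R x =
          (inner ℝ (wstar x) (z x (dstar x)) : ℝ) -
            (inner ℝ (wstar x) (z x (dhat x)) : ℝ))
        (_htail : ∀ t : ℝ, 0 < t →
          (μ {ω | γ (X ω) ≤ t}).toReal ≤ Cmar * t ^ α),
        ∫ ω, R (X ω) ∂μ
          ≤ C * (∫ ω, ‖what (X ω) - wstar (X ω)‖ ^ 2 ∂μ)
              ^ ((1 + α) / (2 + α)) := by
  refine ⟨Bz + 4 * Bz ^ 2 + Bz * Cmar + 1, by positivity, ?_⟩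
  intro J Ω 𝒳 _ _ μ _ D _ _ _ X _ z hz wstar what _ _ hL2 dstar dhat hdstar hdhat γ hγ R hR htail
  have hR0 : ∀ x, 0 ≤ R x := fun x => (hR x) ▸ sub_nonneg.2 (hdstar x (dhat x))
  have hγ' : ∀ x, γ x = margin (fun d => ⟪wstar x, z x d⟫) (dstar x) := hγ
  set ε := ∫ ω, ‖what (X ω) - wstar (X ω)‖ ^ 2 ∂μ with hε
  rcases (integral_nonneg fun ω => by positivity : 0 ≤ ε).eq_or_lt with hε0 | hε0
  · have hu := (integral_eq_zero_iff_of_nonneg (fun ω => by positivity) hL2).1 hε0.symm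
    refine (integral_nonpos_of_ae (hu.mono fun ω hω => ?_)).trans (by positivity)
    have hnorm : ‖what (X ω) - wstar (X ω)‖ = 0 := pow_eq_zero_iff two_ne_zero |>.1 hω
    simpa [hR, hnorm] using regret_le_two_mul_norm_sub (a := dstar (X ω)) (w := wstar (X ω))
      (hz (X ω)) (hdhat (X ω))
  · set t := ε ^ (1 / (2 + α))
    have ht : 0 < t := by positivity
    have hpt : ∀ ω, R (X ω) ≤ (Bz + 4 * Bz ^ 2) / t * ‖what (X ω) - wstar (X ω)‖ ^ 2 +
        {ω | γ (X ω) ≤ t}.indicator (fun _ => Bz * t) ω := fun ω => by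
      simpa only [hR, hγ', Set.indicator_apply, Set.mem_ofPred_eq] using
        regret_le_sq_div_add_ite hBz ht (hz (X ω)) (hdstar (X ω)) (hdhat (X ω))
    calc ∫ ω, R (X ω) ∂μ
        ≤ (Bz + 4 * Bz ^ 2) / t * ε + Bz * t * μ.real {ω | γ (X ω) ≤ t} := by
          rw [hε, ← integral_const_mul]
          exact integral_le_integral_add_mul_measureReal (.of_forall fun ω => hR0 (X ω))
            (hL2.const_mul _) (by positivity) (.of_forall hpt)
      _ ≤ (Bz + 4 * Bz ^ 2) / t * ε + Bz * t * (Cmar * t ^ α) := by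
          gcongr
          exact htail t ht
      _ = (Bz + 4 * Bz ^ 2 + Bz * Cmar) * ε ^ ((1 + α) / (2 + α)) := by
          rw [← div_mul_add_mul_rpow_mul_eq hε0 (by positivity)]
          ring
      _ ≤ _ := mul_le_mul_of_nonneg_right (by linarith) (by positivity)
end
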